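/- arXiv:2111.00756 — 5 statements merged into one kernel-verified Lean document; each statement's English description precedes it below -/
import Mathlib

section
/- For all real numbers A > 0, B > 0 and μ ∈ ℝ, the function t ↦ t^{μ−1}·exp(−A t² − B/t²) is integrable on (0,∞), and ∫₀^∞ t^{μ−1} exp(−A t² − B/t²) dt = (1/2)·(B/A)^{μ/4}·∫₀^∞ s^{μ/2−1} exp(−√(AB)·(s + 1/s)) ds, where the integral on the right is also finite. -/
/-!
Substituting `y = t²` turns the left-hand integral into `½ ∫ y ^ (μ/2 - 1) exp (-A y - B / y) dy`,
and the scaling `y = √(B/A) s` balances the two terms of the exponent, both of which acquire the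
coefficient `√(AB)`. Integrability of `s ^ a exp (-k (s + 1/s))` comes from bounding
`exp (-k / s)` by a multiple of `s ^ n` with `n > -a - 1`, which tames the singularity at `0`.
-/

open MeasureTheory Set Real

lemma exp_neg_div_le_factorial_mul_pow_div {k s : ℝ} (hk : 0 < k) (hs : 0 < s) (n : ℕ) :
    exp (-(k / s)) ≤ n.factorial * s ^ n / k ^ n := by
  have hpos : 0 < (k / s) ^ n / n.factorial := by positivity
  calc exp (-(k / s)) = (exp (k / s))⁻¹ := exp_neg _
    _ ≤ ((k / s) ^ n / n.factorial)⁻¹ :=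
      inv_anti₀ hpos (pow_div_factorial_le_exp (k / s) (by positivity) n)
    _ = n.factorial * s ^ n / k ^ n := by rw [div_pow]; field_simp

lemma integrableOn_rpow_mul_exp_neg_mul_add_inv (a : ℝ) {k : ℝ} (hk : 0 < k) :
    IntegrableOn (fun s : ℝ => s ^ a * exp (-k * (s + 1 / s))) (Ioi 0) := by
  obtain ⟨n, hn⟩ := exists_nat_gt (-a - 1)
  have hdom : IntegrableOn
      (fun s : ℝ => (n.factorial / k ^ n : ℝ) * (s ^ (a + n) * exp (-k * s ^ (1 : ℝ)))) (Ioi 0) :=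
    (integrableOn_rpow_mul_exp_neg_mul_rpow (by linarith) one_pos hk).const_mul _
  refine hdom.mono' (by fun_prop) ?_
  filter_upwards [ae_restrict_mem measurableSet_Ioi] with s (hs : 0 < s)
  calc ‖s ^ a * exp (-k * (s + 1 / s))‖ = s ^ a * (exp (-k * s) * exp (-(k / s))) := by
        rw [norm_of_nonneg (by positivity), ← exp_add]
        ring_nf
    _ ≤ s ^ a * (exp (-k * s) * (n.factorial * s ^ n / k ^ n)) := by
        gcongr
        exact exp_neg_div_le_factorial_mul_pow_div hk hs n
    _ = n.factorial / k ^ n * (s ^ (a + n) * exp (-k * s ^ (1 : ℝ))) := by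
        rw [rpow_add hs, rpow_natCast, rpow_one]
        ring

lemma mul_sqrt_div_eq_sqrt_mul {A : ℝ} (hA : 0 ≤ A) (B : ℝ) : A * √(B / A) = √(A * B) := by
  rw [← sqrt_sq hA, ← sqrt_mul (sq_nonneg A), sqrt_sq hA]
  rcases hA.eq_or_lt with rfl | hA
  · simp
  · congr 1
    field_simp

lemma div_sqrt_div_eq_sqrt_mul {A : ℝ} (hA : 0 ≤ A) (B : ℝ) : B / √(B / A) = √(A * B) := by
  rw [sqrt_div' _ hA, div_div_eq_mul_div, ← div_mul_eq_mul_div, div_sqrt, sqrt_mul hA, mul_comm]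

lemma rpow_mul_exp_neg_mul_sub_div_comp_sqrt_div_mul {A : ℝ} (hA : 0 ≤ A) (B a : ℝ) {s : ℝ}
    (hs : 0 < s) :
    (√(B / A) * s) ^ a * exp (-A * (√(B / A) * s) - B / (√(B / A) * s)) =
      √(B / A) ^ a * (s ^ a * exp (-√(A * B) * (s + 1 / s))) := by
  have hexp : -A * (√(B / A) * s) - B / (√(B / A) * s) = -√(A * B) * (s + 1 / s) := by
    calc -A * (√(B / A) * s) - B / (√(B / A) * s)
        = -(A * √(B / A)) * s - B / √(B / A) * (1 / s) := by rw [div_mul_div_comm, mul_one]; ring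
      _ = -√(A * B) * (s + 1 / s) := by
        rw [mul_sqrt_div_eq_sqrt_mul hA, div_sqrt_div_eq_sqrt_mul hA]; ring
  rw [hexp, mul_rpow (by positivity) hs.le, mul_assoc]

lemma integrableOn_rpow_mul_exp_neg_mul_sub_div {A B : ℝ} (hA : 0 < A) (hB : 0 < B) (a : ℝ) :
    IntegrableOn (fun y : ℝ => y ^ a * exp (-A * y - B / y)) (Ioi 0) := by
  have hc : 0 < √(B / A) := sqrt_pos.mpr (div_pos hB hA)
  have hscaled := IntegrableOn.congr_fun ((integrableOn_rpow_mul_exp_neg_mul_add_inv a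
    (sqrt_pos.mpr (mul_pos hA hB))).const_mul (√(B / A) ^ a))
      (fun s hs => (rpow_mul_exp_neg_mul_sub_div_comp_sqrt_div_mul hA.le B a hs).symm)
      measurableSet_Ioi
  simpa only [mul_zero] using
    (integrableOn_Ioi_comp_mul_left_iff (fun y : ℝ => y ^ a * exp (-A * y - B / y)) 0 hc).mp hscaled

lemma integral_rpow_mul_exp_neg_mul_sub_div {A B : ℝ} (hA : 0 < A) (hB : 0 < B) (a : ℝ) :
    ∫ y in Ioi (0 : ℝ), y ^ a * exp (-A * y - B / y) =
      √(B / A) ^ (a + 1) * ∫ s in Ioi (0 : ℝ), s ^ a * exp (-√(A * B) * (s + 1 / s)) := by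
  have hc : 0 < √(B / A) := sqrt_pos.mpr (div_pos hB hA)
  have hsubst := integral_comp_mul_left_Ioi' (fun y : ℝ => y ^ a * exp (-A * y - B / y)) 0 hc
  rw [mul_zero] at hsubst
  rw [← hsubst, setIntegral_congr_fun measurableSet_Ioi
      (fun s hs => rpow_mul_exp_neg_mul_sub_div_comp_sqrt_div_mul hA.le B a hs),
    integral_const_mul, smul_eq_mul, rpow_add_one hc.ne']
  ring

section SquareSubstitution

variable {E : Type*} [NormedAddCommGroup E] [NormedSpace ℝ E]

lemma integrableOn_Ioi_smul_comp_sq_iff (g : ℝ → E) :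
    IntegrableOn (fun x : ℝ => x • g (x ^ 2)) (Ioi 0) ↔ IntegrableOn g (Ioi 0) := by
  rw [← integrableOn_Ioi_comp_rpow_iff' g two_ne_zero]
  norm_num [rpow_two]

lemma integral_Ioi_smul_comp_sq (g : ℝ → E) :
    ∫ x in Ioi (0 : ℝ), x • g (x ^ 2) = (1 / 2 : ℝ) • ∫ y in Ioi (0 : ℝ), g y := by
  have hsubst := integral_comp_rpow_Ioi g two_ne_zero
  rw [show (2 : ℝ) - 1 = 1 by norm_num] at hsubst
  simp only [abs_two, rpow_one, rpow_two, mul_smul, integral_smul] at hsubst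
  rw [← hsubst, smul_smul]
  norm_num

end SquareSubstitution

lemma rpow_sub_one_eq_mul_sq_rpow {t : ℝ} (ht : 0 < t) (μ : ℝ) :
    t ^ (μ - 1) = t * (t ^ 2) ^ (μ / 2 - 1) := by
  calc t ^ (μ - 1) = t ^ (1 + 2 * (μ / 2 - 1)) := by ring_nf
    _ = t * (t ^ 2) ^ (μ / 2 - 1) := by rw [rpow_add ht, rpow_one, rpow_mul ht.le, rpow_two]

theorem statement8 (A B μ : ℝ) (hA : 0 < A) (hB : 0 < B) :
    IntegrableOn (fun t : ℝ => t ^ (μ - 1) * Real.exp (-A * t ^ 2 - B / t ^ 2)) (Ioi 0) ∧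
    IntegrableOn
      (fun s : ℝ => s ^ (μ / 2 - 1) * Real.exp (-Real.sqrt (A * B) * (s + 1 / s))) (Ioi 0) ∧
    ∫ t in Ioi (0 : ℝ), t ^ (μ - 1) * Real.exp (-A * t ^ 2 - B / t ^ 2) =
      (1 / 2) * (B / A) ^ (μ / 4) *
        ∫ s in Ioi (0 : ℝ), s ^ (μ / 2 - 1) * Real.exp (-Real.sqrt (A * B) * (s + 1 / s)) := by
  have hintegrand : EqOn (fun t : ℝ => t ^ (μ - 1) * exp (-A * t ^ 2 - B / t ^ 2))
      (fun t => t • ((t ^ 2) ^ (μ / 2 - 1) * exp (-A * t ^ 2 - B / t ^ 2))) (Ioi 0) :=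
    fun t (ht : 0 < t) => by simp only [rpow_sub_one_eq_mul_sq_rpow ht μ, smul_eq_mul, mul_assoc]
  have hpower : √(B / A) ^ (μ / 2 - 1 + 1) = (B / A) ^ (μ / 4) := by
    rw [sqrt_eq_rpow, ← rpow_mul (div_pos hB hA).le]
    ring_nf
  refine ⟨?_, integrableOn_rpow_mul_exp_neg_mul_add_inv _ (sqrt_pos.mpr (mul_pos hA hB)), ?_⟩
  · exact IntegrableOn.congr_fun ((integrableOn_Ioi_smul_comp_sq_iff _).mpr
      (integrableOn_rpow_mul_exp_neg_mul_sub_div hA hB _)) hintegrand.symm measurableSet_Ioi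
  · rw [setIntegral_congr_fun measurableSet_Ioi hintegrand,
      integral_Ioi_smul_comp_sq (fun y => y ^ (μ / 2 - 1) * exp (-A * y - B / y)),
      integral_rpow_mul_exp_neg_mul_sub_div hA hB, hpower, smul_eq_mul, mul_assoc]
end

section
/- For every ν ∈ ℝ there exists a constant C > 0 such that for all y ≥ 1, the function x ↦ x^{ν−1}·exp(−y(x + 1/x)) is integrable on (0,∞) and ∫₀^∞ x^{ν−1} exp(−y(x + 1/x)) dx ≤ C·exp(−2y). In particular, for every natural number N, yᴺ·∫₀^∞ x^{ν−1} exp(−y(x + 1/x)) dx tends to 0 as y → ∞. -/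
/-! Since `x + 1/x ≥ 2` on `(0, ∞)`, for `y ≥ 1` we have
`y (x + 1/x) ≥ (x + 1/x) + 2 (y - 1)`, so the integrand at `y` is bounded pointwise by
`e² e^{-2y}` times the integrand at `y = 1`. The latter is integrable: near `∞` the factor
`e^{-x}` wins, and near `0` the factor `e^{-1/x} ≤ n! xⁿ` absorbs any power `x^{ν-1}`. -/

open MeasureTheory Set Filter Real

open scoped Nat

lemma two_le_add_one_div {x : ℝ} (hx : 0 < x) : 2 ≤ x + 1 / x := by
  have : x * (x + 1 / x - 2) = (x - 1) ^ 2 := by field_simp; ring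
  nlinarith [sq_nonneg (x - 1)]

lemma exp_neg_div_le {x y : ℝ} (hx : 0 < x) (hy : 0 < y) (n : ℕ) :
    exp (-(y / x)) ≤ n ! * (x / y) ^ n := by
  have hpos : 0 < (y / x) ^ n / n ! := by positivity
  calc exp (-(y / x)) = (exp (y / x))⁻¹ := exp_neg _
    _ ≤ ((y / x) ^ n / n !)⁻¹ := inv_anti₀ hpos (pow_div_factorial_le_exp _ (by positivity) n)
    _ = n ! * (x / y) ^ n := by rw [inv_div, div_pow, div_pow]; field_simp

lemma integrableOn_rpow_mul_exp_neg_mul_add_one_div (s : ℝ) {y : ℝ} (hy : 0 < y) :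
    IntegrableOn (fun x : ℝ => x ^ s * exp (-y * (x + 1 / x))) (Ioi 0) := by
  obtain ⟨n, hn⟩ := exists_nat_ge (-s)
  have hdom : IntegrableOn (fun x : ℝ => n ! / y ^ n * (x ^ (s + n) * exp (-y * x ^ (1 : ℝ))))
      (Ioi 0) :=
    (integrableOn_rpow_mul_exp_neg_mul_rpow (by linarith) one_pos hy).const_mul _
  refine hdom.mono' (by fun_prop) ?_
  filter_upwards [ae_restrict_mem measurableSet_Ioi] with x (hx : 0 < x)
  rw [norm_of_nonneg (by positivity), rpow_one, rpow_add hx, rpow_natCast]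
  calc x ^ s * exp (-y * (x + 1 / x)) = x ^ s * exp (-y * x) * exp (-(y / x)) := by
        rw [mul_assoc, ← exp_add]; ring_nf
    _ ≤ x ^ s * exp (-y * x) * (n ! * (x / y) ^ n) := by
        gcongr; exact exp_neg_div_le hx hy n
    _ = n ! / y ^ n * (x ^ s * x ^ n * exp (-y * x)) := by rw [div_pow]; ring

lemma exp_neg_mul_add_one_div_le {x y : ℝ} (hx : 0 < x) (hy : 1 ≤ y) :
    exp (-y * (x + 1 / x)) ≤ exp 2 * exp (-2 * y) * exp (-1 * (x + 1 / x)) := by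
  rw [← exp_add, ← exp_add, exp_le_exp]
  nlinarith [two_le_add_one_div hx]

lemma tendsto_pow_mul_atTop_of_le_exp_neg {F : ℝ → ℝ} {C b : ℝ} (hb : 0 < b)
    (hF : ∀ᶠ y in atTop, 0 ≤ F y ∧ F y ≤ C * exp (-b * y)) (N : ℕ) :
    Tendsto (fun y => y ^ N * F y) atTop (nhds 0) := by
  have hlim : Tendsto (fun y : ℝ => C * (y ^ (N : ℝ) * exp (-b * y))) atTop (nhds 0) := by
    simpa using (tendsto_rpow_mul_exp_neg_mul_atTop_nhds_zero N b hb).const_mul C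
  refine squeeze_zero' ?_ ?_ hlim
  · filter_upwards [hF, eventually_ge_atTop 0] with y hy hy0 using mul_nonneg (by positivity) hy.1
  · filter_upwards [hF, eventually_ge_atTop 0] with y hy hy0
    rw [rpow_natCast, mul_left_comm]
    exact mul_le_mul_of_nonneg_left hy.2 (by positivity)

theorem statement9 (ν : ℝ) :
    (∃ C : ℝ, 0 < C ∧ ∀ y : ℝ, 1 ≤ y →
      IntegrableOn (fun x : ℝ => x ^ (ν - 1) * Real.exp (-y * (x + 1 / x))) (Ioi 0) ∧
      (∫ x in Ioi (0 : ℝ), x ^ (ν - 1) * Real.exp (-y * (x + 1 / x)))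
        ≤ C * Real.exp (-2 * y)) ∧
    ∀ N : ℕ, Tendsto
      (fun y : ℝ => y ^ N * ∫ x in Ioi (0 : ℝ), x ^ (ν - 1) * Real.exp (-y * (x + 1 / x)))
      atTop (nhds 0) := by
  set I := ∫ x in Ioi (0 : ℝ), x ^ (ν - 1) * exp (-1 * (x + 1 / x))
  have hI : 0 ≤ I := setIntegral_nonneg measurableSet_Ioi fun x (hx : 0 < x) => by positivity
  have hbound : ∀ y : ℝ, 1 ≤ y →
      IntegrableOn (fun x : ℝ => x ^ (ν - 1) * exp (-y * (x + 1 / x))) (Ioi 0) ∧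
      (∫ x in Ioi (0 : ℝ), x ^ (ν - 1) * exp (-y * (x + 1 / x)))
        ≤ exp 2 * (I + 1) * exp (-2 * y) := by
    intro y hy
    have hint := integrableOn_rpow_mul_exp_neg_mul_add_one_div (ν - 1) (by linarith : 0 < y)
    refine ⟨hint, ?_⟩
    calc (∫ x in Ioi (0 : ℝ), x ^ (ν - 1) * exp (-y * (x + 1 / x)))
        ≤ ∫ x in Ioi (0 : ℝ), exp 2 * exp (-2 * y) * (x ^ (ν - 1) * exp (-1 * (x + 1 / x))) :=
          setIntegral_mono_on hint
            ((integrableOn_rpow_mul_exp_neg_mul_add_one_div _ one_pos).const_mul _)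
            measurableSet_Ioi fun x (hx : 0 < x) => by
              rw [mul_left_comm]; gcongr; exact exp_neg_mul_add_one_div_le hx hy
      _ = exp 2 * exp (-2 * y) * I := integral_const_mul _ _
      _ ≤ exp 2 * (I + 1) * exp (-2 * y) := by nlinarith [exp_pos 2, exp_pos (-2 * y)]
  refine ⟨⟨_, by positivity, hbound⟩, tendsto_pow_mul_atTop_of_le_exp_neg (C := exp 2 * (I + 1))
    two_pos ?_⟩
  filter_upwards [eventually_ge_atTop 1] with y hy
  exact ⟨setIntegral_nonneg measurableSet_Ioi fun x (hx : 0 < x) => by positivity, (hbound y hy).2⟩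
end

section
/- Let m₀, m₃, μ ∈ ℝ with m₀ ≠ 0 and m₃ < 0, and fix a₂ > 0. For every a₁ > 0 the function t ↦ t^{μ−1}·exp(t²/(64π m₃ a₂²) + 64π³ m₀² m₃ a₁²/t²) is integrable on (0,∞), and for every natural number N, a₁ᴺ · ∫₀^∞ t^{μ−1} exp(t²/(64π m₃ a₂²) + 64π³ m₀² m₃ a₁²/t²) dt tends to 0 as a₁ → ∞. -/
/-!
After the substitution `b₁ = -1/(64π m₃ a₂²)`, `b₂ = -64π³ m₀² m₃` the integral is
`∫₀^∞ t^s exp(-b₁t² - b₂a²/t²) dt` with `b₁, b₂ > 0` (a modified Bessel function `K` in disguise).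
The bound `exp (-x) ≤ k! / x^k` tames the singularity at `0`, the Gaussian factor the tail.
By AM-GM, `b₁t²/2 + b₂a²/(2t²) ≥ √(b₁b₂) a`, so half of the exponent already produces the factor
`exp (-√(b₁b₂) a)`, which beats every power `a^N`; for `a ≥ 1` the other half dominates the
`a`-independent exponent `b₁t²/2 + b₂/(2t²)`, whose integral is a finite constant.
-/

open MeasureTheory Set Filter Real

open scoped Nat

noncomputable def besselKIntegrand (s b₁ b₂ t : ℝ) : ℝ :=
  t ^ s * exp (-(b₁ * t ^ 2) - b₂ / t ^ 2)

lemma exp_neg_le_factorial_div_pow {x : ℝ} (hx : 0 < x) (k : ℕ) : exp (-x) ≤ k ! / x ^ k := by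
  have h := pow_div_factorial_le_exp (x := x) hx.le k
  rw [div_le_iff₀ (by positivity)] at h
  rw [le_div_iff₀ (by positivity), exp_neg, inv_mul_le_iff₀ (exp_pos x)]
  exact h

section

variable {s b₁ b₂ : ℝ}

lemma besselKIntegrand_nonneg {t : ℝ} (ht : 0 ≤ t) : 0 ≤ besselKIntegrand s b₁ b₂ t :=
  mul_nonneg (rpow_nonneg ht _) (exp_pos _).le

lemma besselKIntegrand_le_rpow_mul_exp_neg_mul_sq (hb₂ : 0 < b₂) (k : ℕ) {t : ℝ} (ht : 0 < t) :
    besselKIntegrand s b₁ b₂ t ≤ k ! / b₂ ^ k * (t ^ (s + 2 * k) * exp (-b₁ * t ^ 2)) := by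
  have hexp : exp (-(b₂ / t ^ 2)) ≤ k ! * (t ^ 2) ^ k / b₂ ^ k := by
    calc exp (-(b₂ / t ^ 2)) ≤ k ! / (b₂ / t ^ 2) ^ k := exp_neg_le_factorial_div_pow (by positivity) k
      _ = k ! * (t ^ 2) ^ k / b₂ ^ k := by rw [div_pow]; field_simp
  have hpow : t ^ (s + 2 * k) = t ^ s * (t ^ 2) ^ k := by
    rw [rpow_add ht, rpow_mul ht.le, rpow_two, rpow_natCast]
  calc besselKIntegrand s b₁ b₂ t = t ^ s * exp (-b₁ * t ^ 2) * exp (-(b₂ / t ^ 2)) := by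
        rw [besselKIntegrand, sub_eq_add_neg, exp_add, neg_mul, mul_assoc]
    _ ≤ t ^ s * exp (-b₁ * t ^ 2) * (k ! * (t ^ 2) ^ k / b₂ ^ k) := by gcongr
    _ = k ! / b₂ ^ k * (t ^ (s + 2 * k) * exp (-b₁ * t ^ 2)) := by rw [hpow]; ring

lemma integrableOn_besselKIntegrand (hb₁ : 0 < b₁) (hb₂ : 0 < b₂) :
    IntegrableOn (besselKIntegrand s b₁ b₂) (Ioi 0) := by
  obtain ⟨k, hk⟩ := exists_nat_gt (-s)
  have hdom : IntegrableOn (fun t ↦ k ! / b₂ ^ k * (t ^ (s + 2 * k) * exp (-b₁ * t ^ 2))) (Ioi 0) :=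
    (integrableOn_rpow_mul_exp_neg_mul_sq hb₁ (by linarith [k.cast_nonneg (α := ℝ)])).const_mul _
  refine hdom.mono' (by unfold besselKIntegrand; fun_prop) ?_
  filter_upwards [ae_restrict_mem measurableSet_Ioi] with t (ht : 0 < t)
  rw [norm_of_nonneg (besselKIntegrand_nonneg ht.le)]
  exact besselKIntegrand_le_rpow_mul_exp_neg_mul_sq hb₂ k ht

lemma besselKIntegrand_exponent_le (hb₁ : 0 ≤ b₁) (hb₂ : 0 ≤ b₂) {a t : ℝ} (ha : 1 ≤ a) (ht : 0 < t) :
    -(b₁ * t ^ 2) - b₂ * a ^ 2 / t ^ 2 ≤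
      -√(b₁ * b₂) * a + (-(b₁ / 2 * t ^ 2) - b₂ / 2 / t ^ 2) := by
  have hamgm : 2 * (√b₁ * t) * (√b₂ * a / t) ≤ (√b₁ * t) ^ 2 + (√b₂ * a / t) ^ 2 :=
    two_mul_le_add_sq _ _
  have hprod : √b₁ * t * (√b₂ * a / t) = √(b₁ * b₂) * a := by
    rw [sqrt_mul hb₁]; field_simp
  have hsq : (√b₁ * t) ^ 2 + (√b₂ * a / t) ^ 2 = b₁ * t ^ 2 + b₂ * a ^ 2 / t ^ 2 := by
    rw [mul_pow, div_pow, mul_pow, sq_sqrt hb₁, sq_sqrt hb₂]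
  have hsmall : b₂ / t ^ 2 ≤ b₂ * a ^ 2 / t ^ 2 := by
    rw [mul_comm b₂]
    exact div_le_div_of_nonneg_right (le_mul_of_one_le_left hb₂ (one_le_pow₀ ha)) (by positivity)
  have : b₂ / 2 / t ^ 2 = b₂ / t ^ 2 / 2 := by ring
  linarith

lemma integral_besselKIntegrand_le (hb₁ : 0 < b₁) (hb₂ : 0 < b₂) {a : ℝ} (ha : 1 ≤ a) :
    ∫ t in Ioi 0, besselKIntegrand s b₁ (b₂ * a ^ 2) t ≤
      exp (-√(b₁ * b₂) * a) * ∫ t in Ioi 0, besselKIntegrand s (b₁ / 2) (b₂ / 2) t := by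
  rw [← integral_const_mul]
  refine setIntegral_mono_on (integrableOn_besselKIntegrand hb₁ (by positivity))
    ((integrableOn_besselKIntegrand (by positivity) (by positivity)).const_mul _)
    measurableSet_Ioi fun t (ht : 0 < t) ↦ ?_
  calc besselKIntegrand s b₁ (b₂ * a ^ 2) t
      ≤ t ^ s * exp (-√(b₁ * b₂) * a + (-(b₁ / 2 * t ^ 2) - b₂ / 2 / t ^ 2)) := by
        rw [besselKIntegrand, mul_div_assoc]
        gcongr
        rw [← mul_div_assoc]
        exact besselKIntegrand_exponent_le hb₁.le hb₂.le ha ht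
    _ = exp (-√(b₁ * b₂) * a) * besselKIntegrand s (b₁ / 2) (b₂ / 2) t := by
        rw [besselKIntegrand, exp_add]; ring

lemma tendsto_pow_mul_integral_besselKIntegrand (hb₁ : 0 < b₁) (hb₂ : 0 < b₂) (N : ℕ) :
    Tendsto (fun a ↦ a ^ N * ∫ t in Ioi 0, besselKIntegrand s b₁ (b₂ * a ^ 2) t) atTop (nhds 0) := by
  set C := ∫ t in Ioi 0, besselKIntegrand s (b₁ / 2) (b₂ / 2) t
  have hdecay : Tendsto (fun a : ℝ ↦ C * (a ^ N * exp (-√(b₁ * b₂) * a))) atTop (nhds 0) := by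
    have h := (tendsto_rpow_mul_exp_neg_mul_atTop_nhds_zero N _
      (sqrt_pos.mpr (mul_pos hb₁ hb₂))).const_mul C
    simpa only [rpow_natCast, mul_zero] using h
  refine tendsto_of_tendsto_of_tendsto_of_le_of_le' tendsto_const_nhds hdecay ?_ ?_
  all_goals filter_upwards [eventually_ge_atTop 1] with a ha
  · exact mul_nonneg (by positivity)
      (setIntegral_nonneg measurableSet_Ioi fun t ht ↦ besselKIntegrand_nonneg (le_of_lt ht))
  · calc a ^ N * ∫ t in Ioi 0, besselKIntegrand s b₁ (b₂ * a ^ 2) t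
        ≤ a ^ N * (exp (-√(b₁ * b₂) * a) * C) := by
          gcongr
          exact integral_besselKIntegrand_le hb₁ hb₂ ha
      _ = C * (a ^ N * exp (-√(b₁ * b₂) * a)) := by ring

end

theorem statement10 (m₀ m₃ μ : ℝ) (hm₀ : m₀ ≠ 0) (hm₃ : m₃ < 0)
    (a₂ : ℝ) (ha₂ : 0 < a₂) :
    (∀ a₁ : ℝ, 0 < a₁ →
      IntegrableOn
        (fun t : ℝ => t ^ (μ - 1) *
          Real.exp (t ^ 2 / (64 * π * m₃ * a₂ ^ 2) + 64 * π ^ 3 * m₀ ^ 2 * m₃ * a₁ ^ 2 / t ^ 2))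
        (Ioi 0)) ∧
    ∀ N : ℕ, Tendsto
      (fun a₁ : ℝ => a₁ ^ N *
        ∫ t in Ioi (0 : ℝ), t ^ (μ - 1) *
          Real.exp (t ^ 2 / (64 * π * m₃ * a₂ ^ 2) + 64 * π ^ 3 * m₀ ^ 2 * m₃ * a₁ ^ 2 / t ^ 2))
      atTop (nhds 0) := by
  have hm₃' : 0 < -m₃ := neg_pos.mpr hm₃
  set b₁ := (64 * π * -m₃ * a₂ ^ 2)⁻¹
  set b₂ := 64 * π ^ 3 * m₀ ^ 2 * -m₃
  have hb₁ : 0 < b₁ := by positivity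
  have hb₂ : 0 < b₂ := by positivity
  have hintegrand : ∀ a₁ : ℝ, (fun t : ℝ => t ^ (μ - 1) *
      Real.exp (t ^ 2 / (64 * π * m₃ * a₂ ^ 2) + 64 * π ^ 3 * m₀ ^ 2 * m₃ * a₁ ^ 2 / t ^ 2)) =
      besselKIntegrand (μ - 1) b₁ (b₂ * a₁ ^ 2) := by
    intro a₁; ext t
    simp only [besselKIntegrand, b₁, b₂, div_eq_mul_inv, mul_inv, neg_mul, mul_neg, inv_neg]
    ring_nf
  simp_rw [hintegrand]
  exact ⟨fun a₁ ha₁ ↦ integrableOn_besselKIntegrand hb₁ (by positivity),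
    tendsto_pow_mul_integral_besselKIntegrand hb₁ hb₂⟩
end

section
/- Let λ₁,…,λ_r ∈ ℂ be pairwise distinct and let c₁,…,c_r ∈ ℂ be not all zero. Define f : (0,∞) → ℂ by f(y) := Σᵢ cᵢ·y^{λᵢ}, where y^{λ} := exp(λ·log y). Then f is not rapidly decreasing at infinity: it is not the case that for every natural number N, yᴺ·f(y) → 0 as y → ∞. -/
/-!
Substituting `y = exp t` turns `y ^ N * f y` into the exponential sum `∑ cᵢ exp ((λᵢ + N) t)`,
and for `N` large all exponents have nonnegative real part. Such a sum tends to zero only if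
it is trivial: subtracting `exp (μ s) F t` from the shifted sum `F (t + s)` kills the term
with exponent `μ` and multiplies every other coefficient `cᵢ` by `exp (μᵢ s) - exp (μ s)`,
which is nonzero for a suitable `s`; induction on the number of terms then reduces everything
to a single term `c exp (μ t)`, whose modulus is at least `‖c‖`.
-/

open Filter Topology Complex

lemma exists_exp_mul_ofReal_ne {a b : ℂ} (hab : a ≠ b) :
    ∃ s : ℝ, exp (a * s) ≠ exp (b * s) := by
  by_contra! h
  have h1 : exp (a - b) = 1 := by simpa [sub_eq_zero, exp_sub, div_eq_one_iff_eq] using h 1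
  obtain ⟨n, hn⟩ := exp_eq_one_iff.mp h1
  have hn0 : (n : ℂ) ≠ 0 := by
    rintro hn0
    exact hab (sub_eq_zero.mp (by simpa [hn0] using hn))
  -- at `s = 1 / (2 n)` the difference of the exponents is `π i`, and `exp (π i) = -1`
  have h2 := h (1 / (2 * n))
  rw [← div_eq_one_iff_eq (exp_ne_zero _), ← exp_sub, ← sub_mul, hn] at h2
  have hexponent : (n : ℂ) * (2 * Real.pi * I) * ((1 / (2 * n) : ℝ) : ℂ) = Real.pi * I := by
    push_cast
    field_simp
  rw [hexponent, exp_pi_mul_I] at h2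
  norm_num at h2

lemma eq_zero_of_tendsto_mul_exp {c μ : ℂ} (hμ : 0 ≤ μ.re)
    (h : Tendsto (fun t : ℝ => c * exp (μ * t)) atTop (𝓝 0)) : c = 0 := by
  have hle : ∀ᶠ t : ℝ in atTop, ‖c‖ ≤ ‖c * exp (μ * t)‖ := by
    filter_upwards [eventually_ge_atTop 0] with t ht
    rw [norm_mul, norm_exp, re_mul_ofReal]
    exact le_mul_of_one_le_right (norm_nonneg c) (Real.one_le_exp (mul_nonneg hμ ht))
  exact norm_le_zero_iff.mp (ge_of_tendsto (by simpa using h.norm) hle)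

lemma sum_mul_exp_add_sub {ι : Type*} (s : Finset ι) (c μ : ι → ℂ) (w : ℂ) (u t : ℝ) :
    ∑ i ∈ s, c i * exp (μ i * ↑(t + u)) - exp (w * u) * ∑ i ∈ s, c i * exp (μ i * t)
      = ∑ i ∈ s, c i * (exp (μ i * u) - exp (w * u)) * exp (μ i * t) := by
  rw [Finset.mul_sum, ← Finset.sum_sub_distrib]
  refine Finset.sum_congr rfl fun i _ => ?_
  rw [ofReal_add, mul_add, exp_add]
  ring

lemma tendsto_sum_mul_exp_add_sub {ι : Type*} {s : Finset ι} {c μ : ι → ℂ}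
    (h : Tendsto (fun t : ℝ => ∑ i ∈ s, c i * exp (μ i * t)) atTop (𝓝 0)) (w : ℂ) (u : ℝ) :
    Tendsto (fun t : ℝ => ∑ i ∈ s, c i * (exp (μ i * u) - exp (w * u)) * exp (μ i * t))
      atTop (𝓝 0) := by
  have hshift := h.comp (tendsto_atTop_add_const_right atTop u tendsto_id)
  simpa only [Function.comp_apply, id, sum_mul_exp_add_sub, mul_zero, sub_zero] using
    hshift.sub (h.const_mul (exp (w * u)))

lemma eq_zero_of_tendsto_sum_mul_exp {ι : Type*} [DecidableEq ι] (s : Finset ι) {μ : ι → ℂ}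
    (hμ : Set.InjOn μ s) (hre : ∀ i ∈ s, 0 ≤ (μ i).re) {c : ι → ℂ}
    (h : Tendsto (fun t : ℝ => ∑ i ∈ s, c i * exp (μ i * t)) atTop (𝓝 0)) :
    ∀ i ∈ s, c i = 0 := by
  induction s using Finset.induction_on generalizing c with
  | empty => simp
  | insert a s ha ih =>
    have hs : ∀ i ∈ s, c i = 0 := by
      intro i hi
      have hia : μ i ≠ μ a := fun heq =>
        ha (hμ (Finset.mem_insert_of_mem hi) (Finset.mem_insert_self a s) heq ▸ hi)
      obtain ⟨u, hu⟩ := exists_exp_mul_ofReal_ne hia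
      have hdiff := tendsto_sum_mul_exp_add_sub h (μ a) u
      simp only [Finset.sum_insert ha, sub_self, mul_zero, zero_mul, zero_add] at hdiff
      have hcoeff := ih (hμ.mono (Finset.coe_subset.mpr (Finset.subset_insert a s)))
        (fun j hj => hre j (Finset.mem_insert_of_mem hj)) hdiff i hi
      exact (mul_eq_zero.mp hcoeff).resolve_right (sub_ne_zero.mpr hu)
    have hsingle : Tendsto (fun t : ℝ => c a * exp (μ a * t)) atTop (𝓝 0) := by
      convert h using 2 with t
      rw [Finset.sum_insert ha, Finset.sum_eq_zero fun i hi => by rw [hs i hi, zero_mul], add_zero]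
    exact Finset.forall_mem_insert .. |>.mpr
      ⟨eq_zero_of_tendsto_mul_exp (hre a (Finset.mem_insert_self a s)) hsingle, hs⟩

theorem statement14 (r : ℕ) (lam : Fin r → ℂ) (hlam : Function.Injective lam)
    (c : Fin r → ℂ) (hc : c ≠ 0) :
    ¬ ∀ N : ℕ, Tendsto
        (fun y : ℝ => (y : ℂ) ^ N * ∑ i, c i * Complex.exp (lam i * Real.log y))
        atTop (nhds 0) := by
  intro H
  obtain ⟨N, hN⟩ := (eventually_all.2 fun i =>
    tendsto_natCast_atTop_atTop.eventually_ge_atTop (-(lam i).re)).exists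
  have hexp : Tendsto (fun t : ℝ => ∑ i, c i * exp ((lam i + N) * t)) atTop (𝓝 0) := by
    convert (H N).comp Real.tendsto_exp_atTop using 2 with t
    simp only [Function.comp_apply, Real.log_exp, ofReal_exp, ← exp_nat_mul, Finset.mul_sum]
    refine Finset.sum_congr rfl fun i _ => ?_
    rw [add_mul, exp_add]
    ring
  refine hc (funext fun i => eq_zero_of_tendsto_sum_mul_exp Finset.univ
    (fun i _ j _ hij => hlam (add_right_cancel hij)) (fun i _ => ?_) hexp i (Finset.mem_univ i))
  simpa [add_comm, neg_le_iff_add_nonneg] using hN i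
end

section
/- Let m ∈ ℤ∖{0} and α ∈ ℤ with 1 ≤ α ≤ 2|m| and 4m ∣ α², and set γ := n(α/(2m),0,0,0). Let N_S(ℤ) := {n(0,u₁,u₂,u₃) : u₁,u₂,u₃ ∈ ℤ}, Z_J(ℤ) := {n(0,u₁,0,0) : u₁ ∈ ℤ}, and V_J := {n(0,0,u₂,u₃) : u₂,u₃ ∈ ℝ}. Then the set H := {z·w : z ∈ Z_J(ℤ), w ∈ γ⁻¹·V_J·γ with all matrix entries of w in ℤ} is a subgroup of the abelian group N_S(ℤ), and H has finite index in N_S(ℤ). -/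
/-!
Conjugating `n(0,0,u₂,u₃)` by `γ = n(c,0,0,0)`, `c = α/(2m)`, gives
`n(0, c²u₃ - 2cu₂, u₂ - cu₃, u₃)`. Writing `a = u₂ - cu₃`, `b = u₃` and `α² = 4mk`, this is
`n(0, -(αa + kb)/m, a, b)`, so `H = {n(0,s,a,b) : s, a, b ∈ ℤ, m ∣ αa + kb}`. As
`(s,a,b) ↦ n(0,s,a,b)` is a homomorphism from `ℤ³`, `H` is the image of a subgroup of `ℤ³`
containing `ℤ × mℤ × mℤ`, hence a subgroup of finite index in `N_S(ℤ)`.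
-/

open Matrix

noncomputable section

/-- `n(u₀,u₁,u₂,u₃) = S(u₁,u₂,u₃) · L(u₀)`. -/
def nMat (u₀ u₁ u₂ u₃ : ℝ) : Matrix (Fin 4) (Fin 4) ℝ :=
  !![1,0,u₁,u₂; 0,1,u₂,u₃; 0,0,1,0; 0,0,0,1] *
  !![1,u₀,0,0; 0,1,0,0; 0,0,1,0; 0,0,-u₀,1]

/-- `N_S(ℤ) = {n(0,u₁,u₂,u₃) : u₁,u₂,u₃ ∈ ℤ}`. -/
def NSZ : Set (Matrix (Fin 4) (Fin 4) ℝ) :=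
  {x | ∃ u₁ u₂ u₃ : ℤ, x = nMat 0 u₁ u₂ u₃}

/-- `Z_J(ℤ) = {n(0,u₁,0,0) : u₁ ∈ ℤ}`. -/
def ZJZ : Set (Matrix (Fin 4) (Fin 4) ℝ) :=
  {x | ∃ u₁ : ℤ, x = nMat 0 u₁ 0 0}

/-- `V_J = {n(0,0,u₂,u₃) : u₂,u₃ ∈ ℝ}`. -/
def VJ : Set (Matrix (Fin 4) (Fin 4) ℝ) :=
  {x | ∃ u₂ u₃ : ℝ, x = nMat 0 0 u₂ u₃}

/-- `γ = n(α/(2m),0,0,0)`. -/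
def gammaMat (m α : ℤ) : Matrix (Fin 4) (Fin 4) ℝ :=
  nMat ((α : ℝ) / (2 * (m : ℝ))) 0 0 0

/-- `H = {z·w : z ∈ Z_J(ℤ), w ∈ γ⁻¹·V_J·γ with all entries of w integers}`. -/
def Hset (m α : ℤ) : Set (Matrix (Fin 4) (Fin 4) ℝ) :=
  {x | ∃ z ∈ ZJZ, ∃ w : Matrix (Fin 4) (Fin 4) ℝ,
    (∃ v ∈ VJ, w = (gammaMat m α)⁻¹ * v * gammaMat m α) ∧
    (∀ i j : Fin 4, ∃ q : ℤ, w i j = (q : ℝ)) ∧ x = z * w}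

lemma nMat_eq (u₀ u₁ u₂ u₃ : ℝ) :
    nMat u₀ u₁ u₂ u₃ =
      !![1, u₀, u₁ - u₀ * u₂, u₂;
         0, 1, u₂ - u₀ * u₃, u₃;
         0, 0, 1, 0;
         0, 0, -u₀, 1] := by
  ext i j
  fin_cases i <;> fin_cases j <;> simp [nMat, mul_apply, Fin.sum_univ_four] <;> ring

lemma nMat_zero_zero_zero_zero : nMat 0 0 0 0 = 1 := by
  ext i j
  fin_cases i <;> fin_cases j <;> simp [nMat_eq, one_apply]

lemma nMat_zero_mul_nMat_zero (a b c a' b' c' : ℝ) :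
    nMat 0 a b c * nMat 0 a' b' c' = nMat 0 (a + a') (b + b') (c + c') := by
  simp only [nMat_eq]
  ext i j
  fin_cases i <;> fin_cases j <;> simp [mul_apply, Fin.sum_univ_four] <;> ring

lemma nMat_zero_inv (a b c : ℝ) : (nMat 0 a b c)⁻¹ = nMat 0 (-a) (-b) (-c) :=
  inv_eq_right_inv <| by simp [nMat_zero_mul_nMat_zero, nMat_zero_zero_zero_zero]

lemma nMat_mul_nMat_zero_zero_zero (c c' : ℝ) :
    nMat c 0 0 0 * nMat c' 0 0 0 = nMat (c + c') 0 0 0 := by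
  simp only [nMat_eq]
  ext i j
  fin_cases i <;> fin_cases j <;> simp [mul_apply, Fin.sum_univ_four] <;> ring

lemma nMat_zero_zero_zero_inv (c : ℝ) : (nMat c 0 0 0)⁻¹ = nMat (-c) 0 0 0 :=
  inv_eq_right_inv <| by simp [nMat_mul_nMat_zero_zero_zero, nMat_zero_zero_zero_zero]

lemma nMat_conj_VJ (c u₂ u₃ : ℝ) :
    nMat (-c) 0 0 0 * nMat 0 0 u₂ u₃ * nMat c 0 0 0 =
      nMat 0 (c ^ 2 * u₃ - 2 * c * u₂) (u₂ - c * u₃) u₃ := by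
  simp only [nMat_eq]
  ext i j
  fin_cases i <;> fin_cases j <;> simp [mul_apply, Fin.sum_univ_four] <;> ring

lemma nMat_zero_intCast (s a b : ℤ) :
    nMat 0 s a b =
      (!![1, 0, s, a; 0, 1, a, b; 0, 0, 1, 0; 0, 0, 0, 1] : Matrix (Fin 4) (Fin 4) ℤ).map (↑) := by
  ext i j
  fin_cases i <;> fin_cases j <;> simp [nMat_eq]

lemma nMat_zero_intCast_entries (s a b : ℤ) (i j : Fin 4) : ∃ q : ℤ, nMat 0 s a b i j = q :=
  ⟨_, by rw [nMat_zero_intCast, map_apply]⟩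

section Hset

variable {m α k : ℤ}

/-- The `u₁`-entry `c²b - 2c(a + cb)` of the conjugate, `c = α/(2m)`, equals `-(αa + kb)/m`
because `c² = k/m`. -/
lemma gammaMat_inv_mul_nMat_mul_gammaMat (hm : m ≠ 0) (hk : α ^ 2 = 4 * m * k) (a b : ℝ) :
    (gammaMat m α)⁻¹ * nMat 0 0 (a + α / (2 * m) * b) b * gammaMat m α =
      nMat 0 (-(α * a + k * b) / m) a b := by
  have hm' : (m : ℝ) ≠ 0 := Int.cast_ne_zero.mpr hm
  have hk' : (α : ℝ) ^ 2 = 4 * m * k := by exact_mod_cast hk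
  rw [gammaMat, nMat_zero_zero_zero_inv, nMat_conj_VJ]
  congr 1
  · field_simp
    linear_combination (-b) * hk'
  · ring

lemma exists_conj_VJ_iff (hm : m ≠ 0) (hk : α ^ 2 = 4 * m * k) (w : Matrix (Fin 4) (Fin 4) ℝ) :
    (∃ v ∈ VJ, w = (gammaMat m α)⁻¹ * v * gammaMat m α) ↔
      ∃ a b : ℝ, w = nMat 0 (-(α * a + k * b) / m) a b := by
  constructor
  · rintro ⟨_, ⟨p, b, rfl⟩, rfl⟩
    refine ⟨p - α / (2 * m) * b, b, ?_⟩
    rw [← gammaMat_inv_mul_nMat_mul_gammaMat hm hk, sub_add_cancel]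
  · rintro ⟨a, b, rfl⟩
    exact ⟨_, ⟨_, _, rfl⟩, (gammaMat_inv_mul_nMat_mul_gammaMat hm hk a b).symm⟩

lemma mem_Hset_iff (hm : m ≠ 0) (hk : α ^ 2 = 4 * m * k) (x : Matrix (Fin 4) (Fin 4) ℝ) :
    x ∈ Hset m α ↔ ∃ s a b : ℤ, m ∣ α * a + k * b ∧ x = nMat 0 s a b := by
  have hm' : (m : ℝ) ≠ 0 := Int.cast_ne_zero.mpr hm
  simp only [Hset, exists_conj_VJ_iff hm hk]
  constructor
  · rintro ⟨_, ⟨s, rfl⟩, _, ⟨a, b, rfl⟩, hint, rfl⟩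
    obtain ⟨j, hj⟩ := hint 0 2
    obtain ⟨a', ha⟩ := hint 0 3
    obtain ⟨b', hb⟩ := hint 1 3
    simp only [nMat_eq, of_apply, cons_val', cons_val, empty_val', cons_val_fin_one, zero_mul,
      sub_zero] at hj ha hb
    subst ha hb
    refine ⟨s + j, a', b', ⟨-j, ?_⟩, ?_⟩
    · rw [div_eq_iff hm'] at hj
      exact_mod_cast (by linear_combination -hj : (α * a' + k * b' : ℝ) = m * -j)
    · rw [nMat_zero_mul_nMat_zero, hj]
      push_cast
      ring_nf
  · rintro ⟨s, a, b, ⟨j, hj⟩, rfl⟩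
    have hj' : (α * a + k * b : ℝ) = m * j := by exact_mod_cast hj
    refine ⟨_, ⟨s + j, rfl⟩, _, ⟨a, b, rfl⟩, ?_, ?_⟩
    · rw [hj', neg_div, mul_div_cancel_left₀ _ hm', ← Int.cast_neg]
      exact nMat_zero_intCast_entries _ _ _
    · rw [nMat_zero_mul_nMat_zero, hj', neg_div, mul_div_cancel_left₀ _ hm']
      push_cast
      ring_nf

lemma Hset_subset_NSZ (hm : m ≠ 0) (hk : α ^ 2 = 4 * m * k) : Hset m α ⊆ NSZ := by
  intro x hx
  obtain ⟨s, a, b, -, rfl⟩ := (mem_Hset_iff hm hk x).1 hx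
  exact ⟨s, a, b, rfl⟩

lemma one_mem_Hset (hm : m ≠ 0) (hk : α ^ 2 = 4 * m * k) : 1 ∈ Hset m α :=
  (mem_Hset_iff hm hk 1).2 ⟨0, 0, 0, by simp, by simp [nMat_zero_zero_zero_zero]⟩

lemma mul_mem_Hset (hm : m ≠ 0) (hk : α ^ 2 = 4 * m * k) {x y : Matrix (Fin 4) (Fin 4) ℝ}
    (hx : x ∈ Hset m α) (hy : y ∈ Hset m α) : x * y ∈ Hset m α := by
  obtain ⟨s, a, b, hab, rfl⟩ := (mem_Hset_iff hm hk x).1 hx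
  obtain ⟨s', a', b', hab', rfl⟩ := (mem_Hset_iff hm hk y).1 hy
  refine (mem_Hset_iff hm hk _).2
    ⟨s + s', a + a', b + b', ?_, by push_cast; rw [nMat_zero_mul_nMat_zero]⟩
  rw [show α * (a + a') + k * (b + b') = α * a + k * b + (α * a' + k * b') by ring]
  exact dvd_add hab hab'

lemma inv_mem_Hset (hm : m ≠ 0) (hk : α ^ 2 = 4 * m * k) {x : Matrix (Fin 4) (Fin 4) ℝ}
    (hx : x ∈ Hset m α) : x⁻¹ ∈ Hset m α := by
  obtain ⟨s, a, b, hab, rfl⟩ := (mem_Hset_iff hm hk x).1 hx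
  refine (mem_Hset_iff hm hk _).2 ⟨-s, -a, -b, ?_, by push_cast; rw [nMat_zero_inv]⟩
  rw [show α * -a + k * -b = -(α * a + k * b) by ring]
  exact hab.neg_right

/-- `H` contains every `n(0,s,a,b)` with `m ∣ a` and `m ∣ b`, so the `n(0,0,r₂,r₃)` with
`0 ≤ r₂, r₃ < |m|` meet every coset. -/
lemma exists_finset_NSZ_subset_mul_Hset (hm : m ≠ 0) (hk : α ^ 2 = 4 * m * k) :
    ∃ T : Finset (Matrix (Fin 4) (Fin 4) ℝ), (T : Set (Matrix (Fin 4) (Fin 4) ℝ)) ⊆ NSZ ∧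
      ∀ x ∈ NSZ, ∃ t ∈ T, ∃ h ∈ Hset m α, x = t * h := by
  refine ⟨(Finset.Ico 0 |m| ×ˢ Finset.Ico 0 |m|).image fun p : ℤ × ℤ ↦ nMat 0 0 p.1 p.2,
    ?_, ?_⟩
  · intro t ht
    obtain ⟨p, -, rfl⟩ := Finset.mem_coe.1 ht |> Finset.mem_image.1
    exact ⟨0, p.1, p.2, by simp⟩
  · rintro _ ⟨u₁, u₂, u₃, rfl⟩
    have hrem (u : ℤ) : u % m ∈ Finset.Ico 0 |m| :=
      Finset.mem_Ico.2 ⟨Int.emod_nonneg u hm, Int.emod_lt_abs u hm⟩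
    refine ⟨_, Finset.mem_image.2 ⟨(u₂ % m, u₃ % m), Finset.mem_product.2 ⟨hrem u₂, hrem u₃⟩,
      rfl⟩, nMat 0 u₁ ↑(u₂ - u₂ % m) ↑(u₃ - u₃ % m), ?_, ?_⟩
    · refine (mem_Hset_iff hm hk _).2 ⟨u₁, _, _, ?_, rfl⟩
      exact dvd_add (Int.dvd_self_sub_emod.mul_left α) (Int.dvd_self_sub_emod.mul_left k)
    · rw [nMat_zero_mul_nMat_zero]
      push_cast
      ring_nf

end Hset

theorem statement15_general (m α : ℤ) (hm : m ≠ 0)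
    (hdvd : (4 * m) ∣ α ^ 2) :
    Hset m α ⊆ NSZ ∧
    (1 : Matrix (Fin 4) (Fin 4) ℝ) ∈ Hset m α ∧
    (∀ x ∈ Hset m α, ∀ y ∈ Hset m α, x * y ∈ Hset m α) ∧
    (∀ x ∈ Hset m α, x⁻¹ ∈ Hset m α) ∧
    ∃ T : Finset (Matrix (Fin 4) (Fin 4) ℝ), (T : Set (Matrix (Fin 4) (Fin 4) ℝ)) ⊆ NSZ ∧
      ∀ x ∈ NSZ, ∃ t ∈ T, ∃ h ∈ Hset m α, x = t * h := by
  obtain ⟨k, hk⟩ := hdvd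
  exact ⟨Hset_subset_NSZ hm hk, one_mem_Hset hm hk, fun _ hx _ hy ↦ mul_mem_Hset hm hk hx hy,
    fun _ hx ↦ inv_mem_Hset hm hk hx, exists_finset_NSZ_subset_mul_Hset hm hk⟩

theorem statement15 (m α : ℤ) (hm : m ≠ 0) (hα1 : 1 ≤ α) (hα2 : α ≤ 2 * |m|)
    (hdvd : (4 * m) ∣ α ^ 2) :
    Hset m α ⊆ NSZ ∧
    (1 : Matrix (Fin 4) (Fin 4) ℝ) ∈ Hset m α ∧
    (∀ x ∈ Hset m α, ∀ y ∈ Hset m α, x * y ∈ Hset m α) ∧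
    (∀ x ∈ Hset m α, x⁻¹ ∈ Hset m α) ∧
    ∃ T : Finset (Matrix (Fin 4) (Fin 4) ℝ), (T : Set (Matrix (Fin 4) (Fin 4) ℝ)) ⊆ NSZ ∧
      ∀ x ∈ NSZ, ∃ t ∈ T, ∃ h ∈ Hset m α, x = t * h :=
  statement15_general m α hm hdvd

end
end
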